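/- arXiv:2305.05637 — 2 statements merged into one kernel-verified Lean document; each statement's English description precedes it below -/
import Mathlib

section
/- Let C ⊆ (𝕋ⁿ)² be a closed monotone pre-congruence. Then the signed part C^∨ of C (the set of signed pairs belonging to C) is a signed bend cone. -/
/-- The tropical (max-plus) semiring 𝕋 = ℝ ∪ {−∞}, modeled as `WithBot ℝ`. -/
abbrev Trop : Type := WithBot ℝ

/-- The map 𝕋 → ℝ, x ↦ eˣ (with e^{−∞} = 0), inducing the metric
d(x,y) = |eˣ − e^y| on 𝕋. -/
noncomputable def tropExp : Trop → ℝ := WithBot.recBotCoe (0 : ℝ) Real.exp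

/-- The topology on 𝕋 induced by the metric d(x,y) = |eˣ − e^y|. -/
noncomputable instance : TopologicalSpace Trop :=
  TopologicalSpace.induced tropExp inferInstance

/-- A pair of vectors (x⁺, x⁻) ∈ (𝕋ⁿ)² is signed if, for every coordinate i,
x⁺_i = −∞ or x⁻_i = −∞. -/
def SignedVecPair {n : ℕ} (x : (Fin n → Trop) × (Fin n → Trop)) : Prop :=
  ∀ i, x.1 i = ⊥ ∨ x.2 i = ⊥

/-- Tropical scalar product of vectors: ⟨x,y⟩ = max_i (x_i + y_i). -/
noncomputable def tdot {n : ℕ} (x y : Fin n → Trop) : Trop :=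
  Finset.univ.sup fun i => x i + y i

/-- The "signed part" f^∨ of a pair of vectors f = (f⁺, f⁻):
f^{∨+}_i = f⁺_i if f⁺_i ≥ f⁻_i and −∞ otherwise;
f^{∨−}_i = f⁻_i if f⁻_i > f⁺_i and −∞ otherwise. -/
noncomputable def vee {n : ℕ} (f : (Fin n → Trop) × (Fin n → Trop)) :
    (Fin n → Trop) × (Fin n → Trop) :=
  (fun i => if f.2 i ≤ f.1 i then f.1 i else ⊥,
   fun i => if f.1 i < f.2 i then f.2 i else ⊥)

/-- Tropical scalar action: (λ ⊙ f)_i = λ + f_i. -/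
noncomputable def tsmul {n : ℕ} (l : Trop) (f : Fin n → Trop) : Fin n → Trop :=
  fun i => l + f i

/-- A monotone pre-congruence C ⊆ (𝕋ⁿ)²: stable by tropical scalar multiplication,
by componentwise max, by "transitivity" (f⁻ = g⁺ implies (f⁺,g⁻) ∈ C), and containing
every pair (f⁺,f⁻) with f⁺ ≥ f⁻. -/
structure IsMonotonePrecongruence {n : ℕ} (C : Set ((Fin n → Trop) × (Fin n → Trop))) : Prop where
  smul_mem : ∀ f ∈ C, ∀ l : Trop, (tsmul l f.1, tsmul l f.2) ∈ C
  add_mem : ∀ f ∈ C, ∀ g ∈ C, (f.1 ⊔ g.1, f.2 ⊔ g.2) ∈ C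
  trans_mem : ∀ f ∈ C, ∀ g ∈ C, f.2 = g.1 → (f.1, g.2) ∈ C
  monotone_mem : ∀ f : (Fin n → Trop) × (Fin n → Trop), f.2 ≤ f.1 → f ∈ C

/-- The pair x ⊕_i y = (x⁺ ⊕ y⁺_{∖i}, x⁻_{∖i} ⊕ y⁻), where z_{∖i} is z with
coordinate i replaced by −∞. -/
noncomputable def oplusI {n : ℕ} (i : Fin n)
    (x y : (Fin n → Trop) × (Fin n → Trop)) : (Fin n → Trop) × (Fin n → Trop) :=
  (x.1 ⊔ Function.update y.1 i ⊥, Function.update x.2 i ⊥ ⊔ y.2)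

/-- A signed bend cone R ⊆ (𝕋ⁿ)²: all elements are signed pairs, R contains all
pairs (x⁺, −∞), is stable by tropical scalar multiplication, and is stable under
the operations x, y ↦ (x ⊕ y)^∨ and x, y ↦ (x ⊕_i y)^∨ (the latter when x⁻_i = y⁺_i). -/
structure IsSignedBendCone {n : ℕ} (R : Set ((Fin n → Trop) × (Fin n → Trop))) : Prop where
  signed : ∀ x ∈ R, SignedVecPair x
  pos_mem : ∀ xp : Fin n → Trop, (xp, fun _ => (⊥ : Trop)) ∈ R
  smul_mem : ∀ x ∈ R, ∀ l : Trop, (tsmul l x.1, tsmul l x.2) ∈ R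
  add_vee_mem : ∀ x ∈ R, ∀ y ∈ R, vee (x.1 ⊔ y.1, x.2 ⊔ y.2) ∈ R
  addI_vee_mem : ∀ x ∈ R, ∀ y ∈ R, ∀ i : Fin n, x.2 i = y.1 i → vee (oplusI i x y) ∈ R

/-- The one-sided polar B^⊲ = {a ∈ 𝕋ⁿ : ⟨x⁺,a⟩ ≥ ⟨x⁻,a⟩ for all (x⁺,x⁻) ∈ B}. -/
def onePolar {n : ℕ} (B : Set ((Fin n → Trop) × (Fin n → Trop))) : Set (Fin n → Trop) :=
  {a | ∀ x ∈ B, tdot x.2 a ≤ tdot x.1 a}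

/-- The signed part C^∨ of a set C ⊆ (𝕋ⁿ)²: the signed pairs belonging to C. -/
def signedPart {n : ℕ} (C : Set ((Fin n → Trop) × (Fin n → Trop))) :
    Set ((Fin n → Trop) × (Fin n → Trop)) :=
  {x ∈ C | SignedVecPair x}

/-- The signed polar A° of A ⊆ 𝕋ⁿ : the set of signed pairs (x⁺,x⁻) with
⟨x⁺,a⟩ ≥ ⟨x⁻,a⟩ for all a ∈ A. -/
def signedPolar {n : ℕ} (A : Set (Fin n → Trop)) :
    Set ((Fin n → Trop) × (Fin n → Trop)) :=
  {x | SignedVecPair x ∧ ∀ a ∈ A, tdot x.2 a ≤ tdot x.1 a}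

/-!
For `f ∈ C` write `vee f = (a, b)`. Transitivity with `(f⁻, b) ∈ C` (note `b ≤ f⁻`) gives
`(f⁺, b) ∈ C`. The coordinates where `f⁺` is beaten by `f⁻` are beaten by a uniform gap `-t > 0`,
so `f⁺ ≤ a ⊕ t ⊙ b`, and adding `(a ⊕ t ⊙ b, −∞)` yields `(a ⊕ t ⊙ b, b) ∈ C`. Membership of
`(a ⊕ t ⊙ b, b)` is additive in `t ≤ 0`, so it holds for every multiple `k t`, and closedness
lets `k → ∞` remove the perturbation: `vee f ∈ C`. Finally `x ⊕_i y ∈ C` because, when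
`x⁻_i = y⁺_i`, the sums `x ⊕ (y⁺_{∖i}, y⁺_{∖i})` and `(x⁻_{∖i}, x⁻_{∖i}) ⊕ y` chain by transitivity.
-/

open Filter Topology

lemma tropExp_nonneg (x : Trop) : 0 ≤ tropExp x := by
  induction x using WithBot.recBotCoe with
  | bot => exact le_rfl
  | coe r => exact (Real.exp_pos r).le

lemma tropExp_monotone : Monotone tropExp := by
  intro u v h
  induction u using WithBot.recBotCoe with
  | bot => exact tropExp_nonneg v
  | coe r =>
    induction v using WithBot.recBotCoe with
    | bot => exact absurd h (by simp)
    | coe s => exact Real.exp_le_exp.2 (WithBot.coe_le_coe.1 h)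

lemma tropExp_coe_add (r : ℝ) (x : Trop) : tropExp (↑r + x) = Real.exp r * tropExp x := by
  induction x using WithBot.recBotCoe with
  | bot => exact (mul_zero _).symm
  | coe s => exact Real.exp_add r s

lemma isInducing_tropExp : IsInducing tropExp := ⟨rfl⟩

section tsmul

variable {n : ℕ}

lemma tsmul_zero (a : Fin n → Trop) : tsmul 0 a = a :=
  funext fun i => zero_add (a i)

lemma tsmul_tsmul (l m : Trop) (a : Fin n → Trop) : tsmul l (tsmul m a) = tsmul (l + m) a :=
  funext fun i => (add_assoc l m (a i)).symm

lemma tsmul_sup (l : Trop) (a b : Fin n → Trop) : tsmul l (a ⊔ b) = tsmul l a ⊔ tsmul l b :=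
  funext fun _ => (add_right_mono (a := l)).map_max

lemma tsmul_le_self {l : Trop} (hl : l ≤ 0) (a : Fin n → Trop) : tsmul l a ≤ a :=
  fun _ => add_le_of_nonpos_left hl

lemma SignedVecPair.tsmul {x : (Fin n → Trop) × (Fin n → Trop)} (hx : SignedVecPair x) (l : Trop) :
    SignedVecPair (tsmul l x.1, tsmul l x.2) := fun i =>
  (hx i).imp (fun h => by simp [_root_.tsmul, h]) (fun h => by simp [_root_.tsmul, h])

lemma tendsto_sup_tsmul_atBot (a b : Fin n → Trop) :
    Tendsto (fun s : ℝ => a ⊔ tsmul ↑s b) atBot (𝓝 a) := by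
  refine tendsto_pi_nhds.2 fun i => isInducing_tropExp.tendsto_nhds_iff.2 ?_
  have hexp : ∀ s : ℝ, tropExp (a i ⊔ (↑s + b i)) = max (tropExp (a i)) (Real.exp s * tropExp (b i)) :=
    fun s => by rw [tropExp_monotone.map_max, tropExp_coe_add]
  have hvanish : Tendsto (fun s : ℝ => Real.exp s * tropExp (b i)) atBot (𝓝 0) := by
    simpa using Real.tendsto_exp_atBot.mul_const (tropExp (b i))
  have hmax := (tendsto_const_nhds (x := tropExp (a i))).max hvanish
  rw [max_eq_left (tropExp_nonneg (a i))] at hmax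
  simpa [Function.comp_def, _root_.tsmul, hexp] using hmax

end tsmul

lemma exists_neg_forall_lt_imp_le {ι : Type*} [Finite ι] (x y : ι → Trop) :
    ∃ t : ℝ, t < 0 ∧ ∀ i, x i < y i → x i ≤ ↑t + y i := by
  have hgap : ∀ i, ∀ᶠ t : ℝ in 𝓝[<] 0, x i < y i → x i ≤ ↑t + y i := by
    intro i
    induction x i using WithBot.recBotCoe with
    | bot => exact Eventually.of_forall fun _ _ => bot_le
    | coe r =>
      induction y i using WithBot.recBotCoe with
      | bot => exact Eventually.of_forall fun _ h => absurd h not_lt_bot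
      | coe s =>
        by_cases hrs : r < s
        · filter_upwards [Ioo_mem_nhdsLT (sub_neg.2 hrs)] with t ht _
          rw [← WithBot.coe_add, WithBot.coe_le_coe]
          linarith [ht.1]
        · exact Eventually.of_forall fun _ h => absurd (WithBot.coe_lt_coe.1 h) hrs
  exact (eventually_mem_nhdsWithin.and (eventually_all.2 hgap)).exists

lemma signedVecPair_vee {n : ℕ} (f : (Fin n → Trop) × (Fin n → Trop)) : SignedVecPair (vee f) := by
  intro i
  by_cases h : f.1 i < f.2 i
  · exact Or.inl (if_neg (not_le.2 h))
  · exact Or.inr (if_neg h)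

namespace IsMonotonePrecongruence

variable {n : ℕ} {C : Set ((Fin n → Trop) × (Fin n → Trop))}

lemma sup_diag_mem (hC : IsMonotonePrecongruence C) {f : (Fin n → Trop) × (Fin n → Trop)}
    (hf : f ∈ C) (z : Fin n → Trop) : (z ⊔ f.1, z ⊔ f.2) ∈ C :=
  hC.add_mem (z, z) (hC.monotone_mem (z, z) le_rfl) f hf

lemma sup_tsmul_add_mem (hC : IsMonotonePrecongruence C) {a b : Fin n → Trop} {l m : Trop}
    (hl : l ≤ 0) (hlC : (a ⊔ tsmul l b, b) ∈ C) (hmC : (a ⊔ tsmul m b, b) ∈ C) :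
    (a ⊔ tsmul (l + m) b, b) ∈ C := by
  have hscaled := hC.sup_diag_mem (hC.smul_mem _ hmC l) a
  simp only [tsmul_sup, tsmul_tsmul, ← sup_assoc, sup_eq_left.2 (tsmul_le_self hl a)] at hscaled
  exact hC.trans_mem _ hscaled _ hlC rfl

lemma mem_of_sup_tsmul_mem (hC : IsMonotonePrecongruence C) (hclosed : IsClosed C)
    {a b : Fin n → Trop} {t : ℝ} (ht : t < 0) (hab : (a ⊔ tsmul ↑t b, b) ∈ C) : (a, b) ∈ C := by
  have hmul : ∀ k : ℕ, (a ⊔ tsmul ↑((k : ℝ) * t) b, b) ∈ C := by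
    intro k
    induction k with
    | zero =>
      simpa [tsmul_zero] using hC.monotone_mem (a ⊔ b, b) le_sup_right
    | succ k ih =>
      rw [← nsmul_eq_mul, WithBot.coe_nsmul] at ih ⊢
      rw [succ_nsmul']
      exact hC.sup_tsmul_add_mem (WithBot.coe_le_coe.2 ht.le) hab ih
  have hlim : Tendsto (fun k : ℕ => (a ⊔ tsmul ↑((k : ℝ) * t) b, b)) atTop (𝓝 (a, b)) :=
    ((tendsto_sup_tsmul_atBot a b).comp
      (tendsto_natCast_atTop_atTop.atTop_mul_const_of_neg ht)).prodMk_nhds tendsto_const_nhds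
  exact hclosed.mem_of_tendsto hlim (Eventually.of_forall hmul)

lemma vee_mem (hC : IsMonotonePrecongruence C) (hclosed : IsClosed C)
    {f : (Fin n → Trop) × (Fin n → Trop)} (hf : f ∈ C) : vee f ∈ C := by
  obtain ⟨t, ht, hgap⟩ := exists_neg_forall_lt_imp_le f.1 f.2
  set a := (vee f).1
  set b := (vee f).2
  have hb : b ≤ f.2 := fun i => by
    show (if f.1 i < f.2 i then f.2 i else ⊥) ≤ f.2 i
    split <;> simp
  have hfb : (f.1, b) ∈ C := hC.trans_mem f hf (f.2, b) (hC.monotone_mem (f.2, b) hb) rfl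
  have hf₁ : f.1 ≤ a ⊔ tsmul ↑t b := fun i => by
    by_cases hi : f.1 i < f.2 i
    · have hbi : b i = f.2 i := if_pos hi
      exact le_sup_of_le_right (by simpa [_root_.tsmul, hbi] using hgap i hi)
    · have hai : a i = f.1 i := if_pos (not_lt.1 hi)
      exact le_sup_of_le_left hai.ge
  have habC := hC.add_mem (a ⊔ tsmul ↑t b, ⊥) (hC.monotone_mem _ bot_le) _ hfb
  simp only [sup_eq_left.2 hf₁, bot_sup_eq] at habC
  exact hC.mem_of_sup_tsmul_mem hclosed ht habC

lemma oplusI_mem (hC : IsMonotonePrecongruence C) {x y : (Fin n → Trop) × (Fin n → Trop)}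
    (hx : x ∈ C) (hy : y ∈ C) {i : Fin n} (hxy : x.2 i = y.1 i) : oplusI i x y ∈ C := by
  have hmid : x.2 ⊔ Function.update y.1 i ⊥ = Function.update x.2 i ⊥ ⊔ y.1 := by
    funext j
    by_cases hj : j = i
    · subst hj
      simp [hxy]
    · simp [Function.update_of_ne hj]
  have hxC := hC.sup_diag_mem hx (Function.update y.1 i ⊥)
  have hyC := hC.sup_diag_mem hy (Function.update x.2 i ⊥)
  rw [sup_comm _ x.1, sup_comm _ x.2, hmid] at hxC
  exact hC.trans_mem _ hxC _ hyC rfl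

end IsMonotonePrecongruence

/-- The signed part of a closed monotone pre-congruence is a signed bend cone. -/
theorem signedPart_isSignedBendCone {n : ℕ}
    (C : Set ((Fin n → Trop) × (Fin n → Trop)))
    (hC : IsMonotonePrecongruence C) (hclosed : IsClosed C) :
    IsSignedBendCone (signedPart C) := by
  refine ⟨fun _ hx => hx.2, fun _ => ?_, fun x hx l => ?_, fun x hx y hy => ?_,
    fun _ hx _ hy _ hxy => ?_⟩
  · exact ⟨hC.monotone_mem _ fun _ => bot_le, fun _ => Or.inr rfl⟩
  · exact ⟨hC.smul_mem x hx.1 l, hx.2.tsmul l⟩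
  · exact ⟨hC.vee_mem hclosed (hC.add_mem x hx.1 y hy.1), signedVecPair_vee _⟩
  · exact ⟨hC.vee_mem hclosed (hC.oplusI_mem hx.1 hy.1 hxy), signedVecPair_vee _⟩
end

section
/- Suppose R ⊆ (𝕋ⁿ)² consists of signed pairs and satisfies conditions (a) and (b) of the definition of a signed bend cone (it contains all pairs (x⁺,(−∞,…,−∞)) and is stable under tropical scalar multiplication). Then R satisfies conditions (c) and (d) of that definition if and only if R is stable under the operation x ⊕̂^∨ y := (x ⊕̂ y)^∨, where, with I = {i : x⁻_i = y⁺_i}, x ⊕̂ y = (x⁺ ⊕ y⁺_{\setminus I}, x⁻_{\setminus I} ⊕ y⁻) and z_{\setminus I} denotes z with all coordinates in I replaced by −∞. -/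
/-- The pair x ⊕̂ y = (x⁺ ⊕ y⁺_{∖I}, x⁻_{∖I} ⊕ y⁻), where I = {i : x⁻_i = y⁺_i}
and z_{∖I} is z with all coordinates in I replaced by −∞. -/
noncomputable def hatOplus {n : ℕ} (x y : (Fin n → Trop) × (Fin n → Trop)) :
    (Fin n → Trop) × (Fin n → Trop) :=
  (x.1 ⊔ fun i => if x.2 i = y.1 i then ⊥ else y.1 i,
   (fun i => if x.2 i = y.1 i then ⊥ else x.2 i) ⊔ y.2)

/-! The cancellation `x ⊕̂ y` deletes the coordinates where `x⁻` meets `y⁺`. Deleting a chosen set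
`S` of such coordinates interpolates between `⊕` (`S = ∅`), `⊕_i` (`S = {i}`) and `⊕̂` (`S` maximal),
and both sides of the equivalence amount to closure of `R` under every such partial cancellation.
Given `⊕̂`, a partial cancellation is recovered by adding back, through the pairs `(w, −∞) ∈ R`,
the cancelled values `x⁻_j = y⁺_j` with `j ∉ S`; this changes nothing after taking `∨` because
the pairs are signed. Given `⊕` and `⊕_i`, negative coordinates of an element can be erased one
at a time, and positive coordinates of `y` can be cancelled one at a time against the
single-coordinate pairs `(x⁺, x⁻_j e_j)`. -/

noncomputable def veeCoord (p q : Trop) : Trop × Trop :=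
  (if q ≤ p then p else ⊥, if p < q then q else ⊥)

lemma veeCoord_bot_right (p : Trop) : veeCoord p ⊥ = (p, ⊥) := by
  simp [veeCoord, not_lt_bot]

lemma veeCoord_of_signed {p q : Trop} (h : p = ⊥ ∨ q = ⊥) : veeCoord p q = (p, q) := by
  rcases h with rfl | rfl
  · rcases eq_or_ne q ⊥ with rfl | hq
    · simp [veeCoord]
    · simp [veeCoord, hq, bot_lt_iff_ne_bot.2 hq]
  · exact veeCoord_bot_right p

lemma veeCoord_sup_absorb (a b p q : Trop) :
    veeCoord (a ⊔ (veeCoord p q).1) ((veeCoord p q).2 ⊔ b) = veeCoord (a ⊔ p) (q ⊔ b) := by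
  simp only [veeCoord]
  rcases le_or_gt q p with h | h
  · simp only [if_pos h, if_neg (not_lt.2 h), bot_sup_eq]
    rcases le_or_gt q b with hb | hb
    · rw [sup_eq_right.2 hb]
    · have h1 : b ≤ a ⊔ p := hb.le.trans (h.trans le_sup_right)
      have h2 : q ⊔ b ≤ a ⊔ p := sup_le (h.trans le_sup_right) h1
      rw [if_pos h1, if_pos h2, if_neg (not_lt.2 h1), if_neg (not_lt.2 h2)]
  · simp only [if_neg (not_le.2 h), if_pos h, sup_bot_eq]
    rcases le_or_gt p a with ha | ha
    · rw [sup_eq_left.2 ha]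
    · have h1 : a < q ⊔ b := (ha.trans h).trans_le le_sup_left
      have h2 : a ⊔ p < q ⊔ b := sup_lt_iff.2 ⟨h1, h.trans_le le_sup_left⟩
      rw [if_neg (not_le.2 h1), if_neg (not_le.2 h2), if_pos h1, if_pos h2]

/-- Adding the cancelled value `q = r` back to the positive side undoes the cancellation. -/
lemma veeCoord_sup_cancel {p q r s : Trop} (hpq : p = ⊥ ∨ q = ⊥) (hrs : r = ⊥ ∨ s = ⊥)
    (h : q = r) : veeCoord (q ⊔ p) s = veeCoord (p ⊔ r) (q ⊔ s) := by
  subst h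
  rcases eq_or_ne q ⊥ with rfl | hq
  · simp
  · obtain rfl := hpq.resolve_right hq
    obtain rfl := hrs.resolve_left hq
    simp [veeCoord]

section
variable {n : ℕ}

lemma vee_congr {f g : (Fin n → Trop) × (Fin n → Trop)}
    (h : ∀ i, veeCoord (f.1 i) (f.2 i) = veeCoord (g.1 i) (g.2 i)) : vee f = vee g :=
  Prod.ext (funext fun i => congrArg Prod.fst (h i)) (funext fun i => congrArg Prod.snd (h i))

@[simp]
lemma vee_fst_apply (f : (Fin n → Trop) × (Fin n → Trop)) (i : Fin n) :
    (vee f).1 i = (veeCoord (f.1 i) (f.2 i)).1 := rfl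

@[simp]
lemma vee_snd_apply (f : (Fin n → Trop) × (Fin n → Trop)) (i : Fin n) :
    (vee f).2 i = (veeCoord (f.1 i) (f.2 i)).2 := rfl

lemma vee_of_signed {z : (Fin n → Trop) × (Fin n → Trop)} (h : SignedVecPair z) : vee z = z :=
  Prod.ext (funext fun i => congrArg Prod.fst (veeCoord_of_signed (h i)))
    (funext fun i => congrArg Prod.snd (veeCoord_of_signed (h i)))

lemma vee_sup_absorb (a b : Fin n → Trop) (f : (Fin n → Trop) × (Fin n → Trop)) :
    vee (a ⊔ (vee f).1, (vee f).2 ⊔ b) = vee (a ⊔ f.1, f.2 ⊔ b) :=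
  vee_congr fun i => veeCoord_sup_absorb (a i) (b i) (f.1 i) (f.2 i)

/-- `z_{∖S}`: the vector `z` with the coordinates in `S` replaced by `−∞`. -/
def killOn (S : Finset (Fin n)) (z : Fin n → Trop) : Fin n → Trop :=
  fun j => if j ∈ S then ⊥ else z j

@[simp]
lemma killOn_empty (z : Fin n → Trop) : killOn ∅ z = z := by
  funext j; simp [killOn]

lemma killOn_insert (a : Fin n) (S : Finset (Fin n)) (z : Fin n → Trop) :
    killOn (insert a S) z = Function.update (killOn S z) a ⊥ := by
  funext j
  by_cases hj : j = a
  · subst hj; simp [killOn]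
  · simp [killOn, hj]

lemma killOn_insert_of_eq_bot {a : Fin n} {z : Fin n → Trop} (ha : z a = ⊥)
    (S : Finset (Fin n)) : killOn (insert a S) z = killOn S z := by
  rw [killOn_insert]
  by_cases haS : a ∈ S
  · exact Function.update_eq_self_iff.2 (by simp [killOn, haS])
  · exact Function.update_eq_self_iff.2 (by simp [killOn, haS, ha])

lemma killOn_singleton (i : Fin n) (z : Fin n → Trop) :
    killOn {i} z = Function.update z i ⊥ := by
  rw [← insert_empty_eq, killOn_insert, killOn_empty]

def cancelOn (S : Finset (Fin n)) (x y : (Fin n → Trop) × (Fin n → Trop)) :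
    (Fin n → Trop) × (Fin n → Trop) :=
  (x.1 ⊔ killOn S y.1, killOn S x.2 ⊔ y.2)

@[simp]
lemma cancelOn_empty (x y : (Fin n → Trop) × (Fin n → Trop)) :
    cancelOn ∅ x y = (x.1 ⊔ y.1, x.2 ⊔ y.2) := by
  simp [cancelOn]

lemma cancelOn_singleton (i : Fin n) (x y : (Fin n → Trop) × (Fin n → Trop)) :
    cancelOn {i} x y = oplusI i x y := by
  simp [cancelOn, oplusI, killOn_singleton]

lemma hatOplus_eq_cancelOn (x y : (Fin n → Trop) × (Fin n → Trop)) :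
    hatOplus x y = cancelOn {j | x.2 j = y.1 j} x y := by
  ext j <;> simp [hatOplus, cancelOn, killOn]

end

section
variable {n : ℕ} {R : Set ((Fin n → Trop) × (Fin n → Trop))}

lemma vee_sup_fst_mem_of_hatOplus
    (hpos : ∀ xp : Fin n → Trop, (xp, fun _ => (⊥ : Trop)) ∈ R)
    (hhat : ∀ x ∈ R, ∀ y ∈ R, vee (hatOplus x y) ∈ R)
    {z : (Fin n → Trop) × (Fin n → Trop)} (hz : z ∈ R) (w : Fin n → Trop) :
    vee (w ⊔ z.1, z.2) ∈ R := by
  convert hhat _ (hpos w) z hz using 2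
  refine Prod.ext (funext fun j => ?_) (funext fun j => ?_)
  · by_cases hj : (⊥ : Trop) = z.1 j <;> simp [hatOplus, hj]
  · simp [hatOplus]

lemma vee_cancelOn_mem_of_hatOplus (hsigned : ∀ x ∈ R, SignedVecPair x)
    (hpos : ∀ xp : Fin n → Trop, (xp, fun _ => (⊥ : Trop)) ∈ R)
    (hhat : ∀ x ∈ R, ∀ y ∈ R, vee (hatOplus x y) ∈ R)
    {x y : (Fin n → Trop) × (Fin n → Trop)} (hx : x ∈ R) (hy : y ∈ R)
    {S : Finset (Fin n)} (hS : ∀ j ∈ S, x.2 j = y.1 j) : vee (cancelOn S x y) ∈ R := by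
  let w : Fin n → Trop := fun j => if j ∉ S ∧ x.2 j = y.1 j then x.2 j else ⊥
  have hw := vee_sup_fst_mem_of_hatOplus hpos hhat (hhat x hx y hy) w
  have := vee_sup_absorb w ⊥ (hatOplus x y)
  simp only [sup_bot_eq] at this
  rw [this] at hw
  convert hw using 1
  refine vee_congr fun j => ?_
  simp only [cancelOn, hatOplus, killOn, w, Pi.sup_apply]
  by_cases hjS : j ∈ S
  · simp [hjS, hS j hjS]
  · by_cases hj : x.2 j = y.1 j
    · simpa [hjS, hj] using (veeCoord_sup_cancel (hsigned x hx j) (hsigned y hy j) hj).symm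
    · simp [hjS, hj]

lemma update_snd_mem_of_oplusI (hsigned : ∀ x ∈ R, SignedVecPair x)
    (hpos : ∀ xp : Fin n → Trop, (xp, fun _ => (⊥ : Trop)) ∈ R)
    (hd : ∀ x ∈ R, ∀ y ∈ R, ∀ i : Fin n, x.2 i = y.1 i → vee (oplusI i x y) ∈ R)
    {z : (Fin n → Trop) × (Fin n → Trop)} (hz : z ∈ R) (i : Fin n) :
    (z.1, Function.update z.2 i ⊥) ∈ R := by
  have h := hd z hz (Function.update ⊥ i (z.2 i), ⊥) (hpos _) i (by simp)
  have hsgn : SignedVecPair (z.1, Function.update z.2 i ⊥) := by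
    intro j
    by_cases hj : j = i
    · subst hj; simp
    · simpa [Function.update_of_ne hj] using hsigned z hz j
  have hbot : Function.update (⊥ : Fin n → Trop) i ⊥ = ⊥ := Function.update_eq_self i ⊥
  simpa [oplusI, hbot, vee_of_signed hsgn] using h

lemma killOn_snd_mem_of_oplusI (hsigned : ∀ x ∈ R, SignedVecPair x)
    (hpos : ∀ xp : Fin n → Trop, (xp, fun _ => (⊥ : Trop)) ∈ R)
    (hd : ∀ x ∈ R, ∀ y ∈ R, ∀ i : Fin n, x.2 i = y.1 i → vee (oplusI i x y) ∈ R)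
    {z : (Fin n → Trop) × (Fin n → Trop)} (hz : z ∈ R) (S : Finset (Fin n)) :
    (z.1, killOn S z.2) ∈ R := by
  induction S using Finset.induction_on with
  | empty => simpa using hz
  | insert a S _ ih =>
    rw [killOn_insert]
    exact update_snd_mem_of_oplusI hsigned hpos hd ih a

lemma vee_sup_killOn_mem_of_oplusI (hsigned : ∀ x ∈ R, SignedVecPair x)
    (hpos : ∀ xp : Fin n → Trop, (xp, fun _ => (⊥ : Trop)) ∈ R)
    (hc : ∀ x ∈ R, ∀ y ∈ R, vee (x.1 ⊔ y.1, x.2 ⊔ y.2) ∈ R)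
    (hd : ∀ x ∈ R, ∀ y ∈ R, ∀ i : Fin n, x.2 i = y.1 i → vee (oplusI i x y) ∈ R)
    {x y : (Fin n → Trop) × (Fin n → Trop)} (hx : x ∈ R) (hy : y ∈ R)
    {S : Finset (Fin n)} (hS : ∀ j ∈ S, x.2 j = y.1 j) : vee (x.1 ⊔ killOn S y.1, y.2) ∈ R := by
  induction S using Finset.induction_on with
  | empty => simpa using hc (x.1, ⊥) (hpos x.1) y hy
  | insert a S haS ih =>
    have ih := ih fun j hj => hS j (Finset.mem_insert_of_mem hj)
    have hxa := hS a (Finset.mem_insert_self a S)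
    rcases eq_or_ne (y.1 a) ⊥ with hya | hya
    · rwa [killOn_insert_of_eq_bot hya]
    have hx1 : x.1 a = ⊥ := (hsigned x hx a).resolve_right (hxa ▸ hya)
    have hy2 : y.2 a = ⊥ := (hsigned y hy a).resolve_left hya
    set w := vee (x.1 ⊔ killOn S y.1, y.2)
    have hwa : w.1 a = x.2 a := by
      simp [w, killOn, haS, hx1, hy2, hxa, veeCoord_bot_right]
    have h := hd _ (killOn_snd_mem_of_oplusI hsigned hpos hd hx (Finset.univ.erase a)) w ih a
      (by simp [killOn, hwa])
    convert h using 1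
    refine vee_congr fun j => ?_
    by_cases hj : j = a
    · subst hj
      simp [oplusI, w, killOn, hx1, hy2, veeCoord_bot_right]
    · have := veeCoord_sup_absorb (x.1 j) ⊥ (x.1 j ⊔ killOn S y.1 j) (y.2 j)
      simp only [sup_bot_eq, ← sup_assoc, sup_idem] at this
      have hkill : killOn (Finset.univ.erase a) x.2 j = ⊥ := by simp [killOn, hj]
      simp [oplusI, w, killOn_insert, hj, hkill, this]

lemma vee_cancelOn_mem_of_oplusI (hsigned : ∀ x ∈ R, SignedVecPair x)
    (hpos : ∀ xp : Fin n → Trop, (xp, fun _ => (⊥ : Trop)) ∈ R)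
    (hc : ∀ x ∈ R, ∀ y ∈ R, vee (x.1 ⊔ y.1, x.2 ⊔ y.2) ∈ R)
    (hd : ∀ x ∈ R, ∀ y ∈ R, ∀ i : Fin n, x.2 i = y.1 i → vee (oplusI i x y) ∈ R)
    {x y : (Fin n → Trop) × (Fin n → Trop)} (hx : x ∈ R) (hy : y ∈ R)
    {S : Finset (Fin n)} (hS : ∀ j ∈ S, x.2 j = y.1 j) : vee (cancelOn S x y) ∈ R := by
  have h := hc _ (killOn_snd_mem_of_oplusI hsigned hpos hd hx S) _
    (vee_sup_killOn_mem_of_oplusI hsigned hpos hc hd hx hy hS)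
  rw [sup_comm (killOn S x.2), vee_sup_absorb, ← sup_assoc, sup_idem, sup_comm y.2] at h
  exact h

end

theorem signedBendCone_conditions_iff_hatOplus_general {n : ℕ}
    (R : Set ((Fin n → Trop) × (Fin n → Trop)))
    (hsigned : ∀ x ∈ R, SignedVecPair x)
    (hpos : ∀ xp : Fin n → Trop, (xp, fun _ => (⊥ : Trop)) ∈ R) :
    ((∀ x ∈ R, ∀ y ∈ R, vee (x.1 ⊔ y.1, x.2 ⊔ y.2) ∈ R) ∧
      (∀ x ∈ R, ∀ y ∈ R, ∀ i : Fin n, x.2 i = y.1 i → vee (oplusI i x y) ∈ R))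
    ↔ (∀ x ∈ R, ∀ y ∈ R, vee (hatOplus x y) ∈ R) := by
  constructor
  · rintro ⟨hc, hd⟩ x hx y hy
    rw [hatOplus_eq_cancelOn]
    exact vee_cancelOn_mem_of_oplusI hsigned hpos hc hd hx hy (by simp)
  · intro hhat
    refine ⟨fun x hx y hy => ?_, fun x hx y hy i hi => ?_⟩
    · simpa using vee_cancelOn_mem_of_hatOplus hsigned hpos hhat hx hy (S := ∅) (by simp)
    · rw [← cancelOn_singleton]
      exact vee_cancelOn_mem_of_hatOplus hsigned hpos hhat hx hy (by simpa using hi)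

/-- For a set R of signed pairs containing all pairs (x⁺, −∞) and stable under
tropical scalar multiplication, conditions (c) and (d) of the definition of a
signed bend cone hold iff R is stable under the operation x, y ↦ (x ⊕̂ y)^∨. -/
theorem signedBendCone_conditions_iff_hatOplus {n : ℕ}
    (R : Set ((Fin n → Trop) × (Fin n → Trop)))
    (hsigned : ∀ x ∈ R, SignedVecPair x)
    (hpos : ∀ xp : Fin n → Trop, (xp, fun _ => (⊥ : Trop)) ∈ R)
    (hsmul : ∀ x ∈ R, ∀ l : Trop, (tsmul l x.1, tsmul l x.2) ∈ R) :
    ((∀ x ∈ R, ∀ y ∈ R, vee (x.1 ⊔ y.1, x.2 ⊔ y.2) ∈ R) ∧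
      (∀ x ∈ R, ∀ y ∈ R, ∀ i : Fin n, x.2 i = y.1 i → vee (oplusI i x y) ∈ R))
    ↔ (∀ x ∈ R, ∀ y ∈ R, vee (hatOplus x y) ∈ R) :=
  signedBendCone_conditions_iff_hatOplus_general R hsigned hpos
end
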